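/- arXiv:math/9903035 — 2 statements merged into one kernel-verified Lean document; each statement's English description precedes it below -/
import Mathlib

section
/- If a, b, c, d are nonnegative integers satisfying P(a,b,c,d) = 0, where P(a,b,c,d) = a^2 + b^2 + c^2 + d^2 - 2ab - 2ac - 2ad - 2bc - 2bd - 2cd - 4abcd - 4, then each of the six pairwise products ab+1, ac+1, ad+1, bc+1, bd+1, cd+1 is a perfect square. -/
/-!
Viewed as a quadratic in `d`, `P a b c d = (d - (a + b + c + 2abc))² - 4(ab+1)(ac+1)(bc+1)`.
So if `ab+1 = r²`, `ac+1 = s²`, `bc+1 = t²`, then `d = a + b + c + 2abc ± 2rst`, and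
`ad+1 = (rs ± at)²`, `bd+1 = (rt ± bs)²`, `cd+1 = (st ± cr)²`: three of the products being
squares forces the other three to be. The three for `a, b, c` come by descent: replacing the
largest entry `d` by the other root `d'` of the quadratic gives a smaller solution, unless
`d' < 0`, which happens only when two of `a, b, c` vanish.
-/

def P (a b c d : ℤ) : ℤ := a^2 + b^2 + c^2 + d^2 - 2*a*b - 2*a*c - 2*a*d - 2*b*c - 2*b*d - 2*c*d - 4*a*b*c*d - 4

theorem forall_of_le_last {α : Type*} [LinearOrder α] {Q : α → α → α → α → Prop}
    (h_sorted : ∀ a b c d, a ≤ d → b ≤ d → c ≤ d → Q a b c d)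
    (h_swap₁₄ : ∀ a b c d, Q d b c a → Q a b c d)
    (h_swap₂₄ : ∀ a b c d, Q a d c b → Q a b c d)
    (h_swap₃₄ : ∀ a b c d, Q a b d c → Q a b c d) (a b c d : α) : Q a b c d := by
  by_cases ha : b ≤ a ∧ c ≤ a ∧ d ≤ a
  · exact h_swap₁₄ _ _ _ _ (h_sorted _ _ _ _ ha.2.2 ha.1 ha.2.1)
  by_cases hb : a ≤ b ∧ c ≤ b ∧ d ≤ b
  · exact h_swap₂₄ _ _ _ _ (h_sorted _ _ _ _ hb.1 hb.2.2 hb.2.1)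
  by_cases hc : a ≤ c ∧ b ≤ c ∧ d ≤ c
  · exact h_swap₃₄ _ _ _ _ (h_sorted _ _ _ _ hc.1 hc.2.1 hc.2.2)
  simp only [not_and_or, not_le] at ha hb hc
  apply h_sorted <;> rcases ha with ha | ha | ha <;> rcases hb with hb | hb | hb <;>
    rcases hc with hc | hc | hc <;> order

theorem P_eq_sq_sub (a b c d : ℤ) :
    P a b c d = (d - (a + b + c + 2*a*b*c))^2 - 4*((a*b+1)*(a*c+1)*(b*c+1)) := by
  unfold P; ring

/-- The second root of `P a b c · = 0`, which as a monic quadratic has root sum `2(a+b+c) + 4abc`. -/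
def otherRoot (a b c d : ℤ) : ℤ := 2*(a + b + c) + 4*a*b*c - d

theorem P_otherRoot (a b c d : ℤ) : P a b c (otherRoot a b c d) = P a b c d := by
  unfold P otherRoot; ring

theorem otherRoot_lt {a b c d : ℤ} (ha : 0 ≤ a) (hb : 0 ≤ b) (hc : 0 ≤ c)
    (had : a ≤ d) (hbd : b ≤ d) (hcd : c ≤ d) (h : P a b c d = 0) : otherRoot a b c d < d := by
  unfold P otherRoot at *
  nlinarith [mul_nonneg ha hb, mul_nonneg (mul_nonneg ha hb) hc]

theorem mul_eq_zero_of_otherRoot_neg {a b c d : ℤ} (ha : 0 ≤ a) (hb : 0 ≤ b) (hc : 0 ≤ c)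
    (hd : 0 ≤ d) (h : P a b c d = 0) (hneg : otherRoot a b c d < 0) : a * b = 0 := by
  have hprod : (1 + d) * (1 + otherRoot a b c d) =
      (a - b)^2 + c^2 + 2*c*((a - 1)*(b - 1) + a*b) + 2*(a + b) - 3 := by
    unfold P otherRoot at *; linear_combination -h
  by_contra hab
  obtain ⟨ha1, hb1⟩ : 1 ≤ a ∧ 1 ≤ b := by have := mul_ne_zero_iff.1 hab; omega
  nlinarith [mul_nonneg (sub_nonneg.2 ha1) (sub_nonneg.2 hb1), mul_nonneg ha hb,
    mul_nonneg hc (mul_nonneg (mul_nonneg (sub_nonneg.2 ha1) (sub_nonneg.2 hb1)) (mul_nonneg ha hb))]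

def MulAddOneSquares (a b c d : ℤ) : Prop :=
  IsSquare (a*b+1) ∧ IsSquare (a*c+1) ∧ IsSquare (a*d+1) ∧
    IsSquare (b*c+1) ∧ IsSquare (b*d+1) ∧ IsSquare (c*d+1)

theorem isSquare_mul_add_one_comm {x y : ℤ} (h : IsSquare (x*y+1)) : IsSquare (y*x+1) := by
  rwa [mul_comm]

namespace MulAddOneSquares

variable {a b c d : ℤ}

theorem swap₁₄ : MulAddOneSquares d b c a → MulAddOneSquares a b c d
  | ⟨hdb, hdc, hda, hbc, hba, hca⟩ =>
    ⟨isSquare_mul_add_one_comm hba, isSquare_mul_add_one_comm hca, isSquare_mul_add_one_comm hda,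
      hbc, isSquare_mul_add_one_comm hdb, isSquare_mul_add_one_comm hdc⟩

theorem swap₂₄ : MulAddOneSquares a d c b → MulAddOneSquares a b c d
  | ⟨had, hac, hab, hdc, hdb, hcb⟩ =>
    ⟨hab, hac, had, isSquare_mul_add_one_comm hcb, isSquare_mul_add_one_comm hdb,
      isSquare_mul_add_one_comm hdc⟩

theorem swap₃₄ : MulAddOneSquares a b d c → MulAddOneSquares a b c d
  | ⟨hab, had, hac, hbd, hbc, hdc⟩ => ⟨hab, hac, had, hbc, hbd, isSquare_mul_add_one_comm hdc⟩

theorem of_P_eq_zero (hab : IsSquare (a*b+1)) (hac : IsSquare (a*c+1)) (hbc : IsSquare (b*c+1))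
    (h : P a b c d = 0) : MulAddOneSquares a b c d := by
  obtain ⟨r, hr⟩ := hab
  obtain ⟨s, hs⟩ := hac
  obtain ⟨t, ht⟩ := hbc
  have hsq : (d - (a + b + c + 2*a*b*c))^2 = (2*r*s*t)^2 := by
    rw [P_eq_sq_sub, hr, hs, ht] at h; linear_combination h
  obtain ⟨u, hu, rfl⟩ : ∃ u, b*c+1 = u*u ∧ d = a + b + c + 2*a*b*c + 2*r*s*u := by
    rcases sq_eq_sq_iff_eq_or_eq_neg.1 hsq with hd | hd
    · exact ⟨t, ht, by linarith⟩
    · exact ⟨-t, by rw [ht]; ring, by linarith⟩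
  refine ⟨⟨r, hr⟩, ⟨s, hs⟩, ⟨r*s + a*u, ?_⟩, ⟨u, hu⟩, ⟨r*u + b*s, ?_⟩, ⟨s*u + c*r, ?_⟩⟩
  · linear_combination (a*c+1)*hr + r*r*hs + a^2*hu
  · linear_combination (b*c+1)*hr + b^2*hs + r*r*hu
  · linear_combination c^2*hr + (b*c+1)*hs + s*s*hu

theorem of_otherRoot (ha : 0 ≤ a) (hb : 0 ≤ b) (hc : 0 ≤ c) (hd : 0 ≤ d) (h : P a b c d = 0)
    (hroot : 0 ≤ otherRoot a b c d → MulAddOneSquares a b c (otherRoot a b c d)) :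
    MulAddOneSquares a b c d := by
  rcases lt_or_ge (otherRoot a b c d) 0 with hneg | hnonneg
  · have hab : a * b = 0 := mul_eq_zero_of_otherRoot_neg ha hb hc hd h hneg
    have hac : a * c = 0 := mul_eq_zero_of_otherRoot_neg ha hc hb hd
      (by unfold P at h ⊢; linarith) (by unfold otherRoot at hneg ⊢; linarith)
    have hbc : b * c = 0 := mul_eq_zero_of_otherRoot_neg hb hc ha hd
      (by unfold P at h ⊢; linarith) (by unfold otherRoot at hneg ⊢; linarith)
    exact of_P_eq_zero (by simp [hab]) (by simp [hac]) (by simp [hbc]) h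
  · obtain ⟨hab, hac, -, hbc, -, -⟩ := hroot hnonneg
    exact of_P_eq_zero hab hac hbc h

end MulAddOneSquares

theorem mulAddOneSquares_of_sum_le (n : ℕ) : ∀ a b c d : ℤ, 0 ≤ a → 0 ≤ b → 0 ≤ c → 0 ≤ d →
    a + b + c + d ≤ n → P a b c d = 0 → MulAddOneSquares a b c d := by
  induction n with
  | zero =>
    intro a b c d ha hb hc hd hsum h
    obtain ⟨rfl, rfl, rfl, rfl⟩ : a = 0 ∧ b = 0 ∧ c = 0 ∧ d = 0 := by push_cast at hsum; omega
    norm_num [P] at h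
  | succ n ih =>
    refine forall_of_le_last ?_ ?_ ?_ ?_
    · intro a b c d had hbd hcd ha hb hc hd hsum h
      refine MulAddOneSquares.of_otherRoot ha hb hc hd h fun hroot => ih _ _ _ _ ha hb hc hroot ?_ ?_
      · have := otherRoot_lt ha hb hc had hbd hcd h
        push_cast at hsum; linarith
      · rwa [P_otherRoot]
    · intro a b c d hQ ha hb hc hd hsum h
      exact (hQ hd hb hc ha (by linarith) (by rw [← h]; unfold P; ring)).swap₁₄
    · intro a b c d hQ ha hb hc hd hsum h
      exact (hQ ha hd hc hb (by linarith) (by rw [← h]; unfold P; ring)).swap₂₄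
    · intro a b c d hQ ha hb hc hd hsum h
      exact (hQ ha hb hd hc (by linarith) (by rw [← h]; unfold P; ring)).swap₃₄

theorem stmt_7 (a b c d : ℤ) (ha : 0 ≤ a) (hb : 0 ≤ b) (hc : 0 ≤ c) (hd : 0 ≤ d)
    (h : P a b c d = 0) :
    IsSquare (a*b+1) ∧ IsSquare (a*c+1) ∧ IsSquare (a*d+1) ∧
    IsSquare (b*c+1) ∧ IsSquare (b*d+1) ∧ IsSquare (c*d+1) :=
  mulAddOneSquares_of_sum_le _ a b c d ha hb hc hd (Int.self_le_toNat _) h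
end

section
/- If a, b, c, d' are integers with P(a,b,c,d') = 0 such that ab+1, ac+1, bc+1, ad'+1, bd'+1, cd'+1 are all perfect squares, and d = 4abc + 2a + 2b + 2c - d', then ab+1, ac+1, bc+1, ad+1, bd+1, cd+1 are all perfect squares. -/
theorem P_eq_sq_sub_mul (a b c d : ℤ) :
    P a b c d = (d - (a + b + c + 2*a*b*c))^2 - 4*(a*b+1)*(a*c+1)*(b*c+1) := by
  unfold P
  ring

theorem isSquare_mul_add_one_of_regular {R : Type*} [CommRing R] {a b c r s t e : R}
    (hr : a*b + 1 = r*r) (hs : a*c + 1 = s*s) (ht : b*c + 1 = t*t)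
    (he : e = a + b + c + 2*a*b*c + 2*r*s*t) :
    IsSquare (a*e + 1) ∧ IsSquare (b*e + 1) ∧ IsSquare (c*e + 1) := by
  subst he
  exact ⟨⟨r*s + a*t, by linear_combination (a*c+1)*hr + (r*r)*hs + a^2*ht⟩,
    ⟨r*t + b*s, by linear_combination (b*c+1)*hr + b^2*hs + (r*r)*ht⟩,
    ⟨s*t + c*r, by linear_combination c^2*hr + (b*c+1)*hs + (s*s)*ht⟩⟩

theorem stmt_11_general (a b c d' : ℤ) (h : P a b c d' = 0)
    (h1 : IsSquare (a*b+1)) (h2 : IsSquare (a*c+1)) (h3 : IsSquare (b*c+1)) :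
    let d := 4*a*b*c + 2*a + 2*b + 2*c - d'
    IsSquare (a*b+1) ∧ IsSquare (a*c+1) ∧ IsSquare (b*c+1) ∧
    IsSquare (a*d+1) ∧ IsSquare (b*d+1) ∧ IsSquare (c*d+1) := by
  intro d
  obtain ⟨r, hr⟩ := h1
  obtain ⟨s, hs⟩ := h2
  obtain ⟨t, ht⟩ := h3
  have hroot : (d - (a + b + c + 2*a*b*c))^2 = (2*r*s*t)^2 := by
    rw [P_eq_sq_sub_mul, hr, hs, ht] at h
    linear_combination h
  refine ⟨⟨r, hr⟩, ⟨s, hs⟩, ⟨t, ht⟩, ?_⟩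
  rcases sq_eq_sq_iff_eq_or_eq_neg.mp hroot with hd | hd
  · exact isSquare_mul_add_one_of_regular hr hs ht (by linear_combination hd)
  · exact isSquare_mul_add_one_of_regular (r := -r) (by linear_combination hr) hs ht
      (by linear_combination hd)

theorem stmt_11 (a b c d' : ℤ) (h : P a b c d' = 0)
    (h1 : IsSquare (a*b+1)) (h2 : IsSquare (a*c+1)) (h3 : IsSquare (b*c+1))
    (h4 : IsSquare (a*d'+1)) (h5 : IsSquare (b*d'+1)) (h6 : IsSquare (c*d'+1)) :
    let d := 4*a*b*c + 2*a + 2*b + 2*c - d'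
    IsSquare (a*b+1) ∧ IsSquare (a*c+1) ∧ IsSquare (b*c+1) ∧
    IsSquare (a*d+1) ∧ IsSquare (b*d+1) ∧ IsSquare (c*d+1) :=
  stmt_11_general a b c d' h h1 h2 h3
end
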